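/- arXiv:2006.01474 — 3 statements merged into one kernel-verified Lean document; each statement's English description precedes it below -/
import Mathlib

section
/- Let (W1, W2) be a centered bivariate Gaussian random vector with Var(W1) = Var(W2) = σ² and Cov(W1, W2) ≥ 0. Then for any l1, l2 ≤ 0 and u1, u2 ≥ 0, P((l1 - u2)/√2 ≤ W1 - W2 ≤ (u1 - l2)/√2) ≥ (1/2)·P(l1 ≤ W1 ≤ u1) + (1/2)·P(l2 ≤ W2 ≤ u2). -/
/-!
Write `N_v` for the centred Gaussian law of variance `v` and `g t = N_v (0, t]`. Since the density
decreases on `[0, ∞)`, `g` is midpoint concave there, and for `l ≤ 0 ≤ u` symmetry gives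
`N_v [l, u] = N_v {0} + g (-l) + g u`. Hence `N_σ² [l₁, u₁] + N_σ² [-u₂, -l₂]` is at most twice
`N_σ² [(l₁ - u₂) / 2, (u₁ - l₂) / 2] = N_2σ² [(l₁ - u₂) / √2, (u₁ - l₂) / √2]`. Finally
`W₁ - W₂` has variance `2σ² - 2c ≤ 2σ²`, and lowering the variance only increases the mass of an
interval around `0`.
-/

open MeasureTheory ProbabilityTheory

open Set
open scoped NNReal ENNReal

namespace ProbabilityTheory

lemma HasLaw.of_map_eq {Ω 𝓧 : Type*} {mΩ : MeasurableSpace Ω} {m𝓧 : MeasurableSpace 𝓧}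
    {X : Ω → 𝓧} {μ : Measure 𝓧} {P : Measure Ω} [NeZero μ] (h : P.map X = μ) :
    HasLaw X μ P :=
  ⟨.of_map_ne_zero (h ▸ NeZero.ne μ), h⟩

section

variable {v : ℝ≥0}

lemma antitoneOn_gaussianPDFReal_zero : AntitoneOn (gaussianPDFReal 0 v) (Ici 0) := by
  intro y hy z _ hyz
  rw [gaussianPDFReal, gaussianPDFReal]
  gcongr
  simpa using hy

lemma gaussianReal_Ioc_add_le {a b d : ℝ} (ha : 0 ≤ a) (hab : a ≤ b) (hd : 0 ≤ d) :
    gaussianReal 0 v (Ioc (a + d) (b + d)) ≤ gaussianReal 0 v (Ioc a b) := by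
  rcases eq_or_ne v 0 with rfl | hv
  · simp [gaussianReal_zero_var, Measure.dirac_apply' _ measurableSet_Ioc, not_lt.2 ha,
      not_lt.2 (add_nonneg ha hd)]
  rw [gaussianReal_apply_eq_integral _ hv, gaussianReal_apply_eq_integral _ hv,
    ← intervalIntegral.integral_of_le (by linarith), ← intervalIntegral.integral_of_le hab,
    intervalIntegral.integral_comp_add_right (gaussianPDFReal 0 v) d |>.symm]
  gcongr
  refine intervalIntegral.integral_mono_on hab
    ((integrable_gaussianPDFReal 0 v).comp_add_right d).intervalIntegrable
    (integrable_gaussianPDFReal 0 v).intervalIntegrable fun x hx ↦ ?_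
  have hx₀ : 0 ≤ x := ha.trans hx.1
  exact antitoneOn_gaussianPDFReal_zero hx₀ (by simp only [mem_Ici]; linarith) (by linarith)

lemma gaussianReal_Ioc_zero_add_le_two_mul {p q : ℝ} (hp : 0 ≤ p) (hq : 0 ≤ q) :
    gaussianReal 0 v (Ioc 0 p) + gaussianReal 0 v (Ioc 0 q)
      ≤ 2 * gaussianReal 0 v (Ioc 0 ((p + q) / 2)) := by
  wlog hpq : p ≤ q generalizing p q
  · rw [add_comm, add_comm p]
    exact this hq hp (by linarith)
  set m := (p + q) / 2 with hm
  have hpm : p ≤ m := by linarith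
  have hmq : m ≤ q := by linarith
  have split {a b c : ℝ} (hab : a ≤ b) (hbc : b ≤ c) :
      gaussianReal 0 v (Ioc a c) = gaussianReal 0 v (Ioc a b) + gaussianReal 0 v (Ioc b c) := by
    rw [← measure_union (Ioc_disjoint_Ioc_of_le le_rfl) measurableSet_Ioc,
      Ioc_union_Ioc_eq_Ioc hab hbc]
  -- the upper half `(m, q]` of `(p, q]` is a translate of the lower half `(p, m]` away from `0`
  have shift : gaussianReal 0 v (Ioc m q) ≤ gaussianReal 0 v (Ioc p m) := by
    convert gaussianReal_Ioc_add_le (v := v) hp hpm (d := m - p) (by linarith) using 3 <;> ring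
  calc gaussianReal 0 v (Ioc 0 p) + gaussianReal 0 v (Ioc 0 q)
      = gaussianReal 0 v (Ioc 0 p) + gaussianReal 0 v (Ioc m q) + gaussianReal 0 v (Ioc 0 m) := by
        rw [split (by linarith) hmq]; ring
    _ ≤ gaussianReal 0 v (Ioc 0 p) + gaussianReal 0 v (Ioc p m) + gaussianReal 0 v (Ioc 0 m) := by
        gcongr
    _ = 2 * gaussianReal 0 v (Ioc 0 m) := by rw [← split hp hpm]; ring

lemma gaussianReal_Icc_neg {l u : ℝ} :
    gaussianReal 0 v (Icc (-u) (-l)) = gaussianReal 0 v (Icc l u) := by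
  conv_lhs =>
    rw [← neg_zero, ← gaussianReal_map_neg, Measure.map_apply measurable_neg measurableSet_Icc]
  simp

lemma gaussianReal_Icc_eq_add {l u : ℝ} (hl : l ≤ 0) (hu : 0 ≤ u) :
    gaussianReal 0 v (Icc l u)
      = gaussianReal 0 v {0} + gaussianReal 0 v (Ioc 0 (-l)) + gaussianReal 0 v (Ioc 0 u) := by
  have split {a b c : ℝ} (hab : a ≤ b) (hbc : b ≤ c) :
      gaussianReal 0 v (Icc a c) = gaussianReal 0 v (Icc a b) + gaussianReal 0 v (Ioc b c) := by
    rw [← measure_union ((Iic_disjoint_Ioc le_rfl).mono_left Icc_subset_Iic_self) measurableSet_Ioc,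
      Icc_union_Ioc_eq_Icc hab hbc]
  rw [split hl hu, ← gaussianReal_Icc_neg, neg_zero, split le_rfl (neg_nonneg.2 hl), Icc_self]

lemma gaussianReal_Icc_add_le_two_mul {l₁ u₁ l₂ u₂ : ℝ} (hl₁ : l₁ ≤ 0) (hu₁ : 0 ≤ u₁)
    (hl₂ : l₂ ≤ 0) (hu₂ : 0 ≤ u₂) :
    gaussianReal 0 v (Icc l₁ u₁) + gaussianReal 0 v (Icc l₂ u₂)
      ≤ 2 * gaussianReal 0 v (Icc ((l₁ + l₂) / 2) ((u₁ + u₂) / 2)) := by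
  rw [gaussianReal_Icc_eq_add hl₁ hu₁, gaussianReal_Icc_eq_add hl₂ hu₂,
    gaussianReal_Icc_eq_add (by linarith) (by linarith),
    show -((l₁ + l₂) / 2) = (-l₁ + -l₂) / 2 by ring]
  calc _ = 2 * gaussianReal 0 v {0}
        + (gaussianReal 0 v (Ioc 0 (-l₁)) + gaussianReal 0 v (Ioc 0 (-l₂)))
        + (gaussianReal 0 v (Ioc 0 u₁) + gaussianReal 0 v (Ioc 0 u₂)) := by ring
    _ ≤ 2 * gaussianReal 0 v {0} + 2 * gaussianReal 0 v (Ioc 0 ((-l₁ + -l₂) / 2))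
        + 2 * gaussianReal 0 v (Ioc 0 ((u₁ + u₂) / 2)) := by
      gcongr
      · exact gaussianReal_Ioc_zero_add_le_two_mul (neg_nonneg.2 hl₁) (neg_nonneg.2 hl₂)
      · exact gaussianReal_Ioc_zero_add_le_two_mul hu₁ hu₂
    _ = _ := by ring

lemma gaussianReal_sq_mul_apply_Icc {k : ℝ} (hk : 0 < k) (a b : ℝ) :
    gaussianReal 0 (.mk (k ^ 2) (sq_nonneg k) * v) (Icc a b)
      = gaussianReal 0 v (Icc (a / k) (b / k)) := by
  have hmap := gaussianReal_map_const_mul (μ := 0) (v := v) k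
  rw [mul_zero] at hmap
  rw [← hmap, Measure.map_apply (by fun_prop) measurableSet_Icc, preimage_const_mul_Icc₀ _ _ hk]

end

lemma gaussianReal_Icc_le_of_var_le {v w : ℝ≥0} (hvw : v ≤ w) {l u : ℝ} (hl : l ≤ 0) (hu : 0 ≤ u) :
    gaussianReal 0 w (Icc l u) ≤ gaussianReal 0 v (Icc l u) := by
  rcases eq_or_ne v 0 with rfl | hv
  · simp [gaussianReal_zero_var, Measure.dirac_apply' _ measurableSet_Icc, hl, hu, prob_le_one]
  set k := Real.sqrt (w / v)
  have hk : 1 ≤ k := Real.one_le_sqrt.2 ((one_le_div (by positivity)).2 hvw)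
  have hw : w = .mk (k ^ 2) (sq_nonneg k) * v := by
    ext
    rw [NNReal.coe_mul, NNReal.coe_mk, Real.sq_sqrt (by positivity),
      div_mul_cancel₀ _ (NNReal.coe_ne_zero.2 hv)]
  rw [hw, gaussianReal_sq_mul_apply_Icc (by linarith)]
  gcongr
  · rw [le_div_iff₀ (by linarith)]
    nlinarith
  · exact div_le_self hu hk

end ProbabilityTheory

theorem stmt0_general {Ω : Type*} [MeasureSpace Ω]
    (W₁ W₂ : Ω → ℝ) (σ2 c : ℝ) (hc : 0 ≤ c)
    (hgauss : ∀ a b : ℝ,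
      Measure.map (fun ω => a * W₁ ω + b * W₂ ω) ℙ
        = gaussianReal 0 (((a ^ 2 + b ^ 2) * σ2 + 2 * a * b * c).toNNReal))
    (l₁ l₂ u₁ u₂ : ℝ) (hl₁ : l₁ ≤ 0) (hl₂ : l₂ ≤ 0) (hu₁ : 0 ≤ u₁) (hu₂ : 0 ≤ u₂) :
    ℙ {ω | (l₁ - u₂) / Real.sqrt 2 ≤ W₁ ω - W₂ ω ∧ W₁ ω - W₂ ω ≤ (u₁ - l₂) / Real.sqrt 2}
      ≥ (1 / 2) * ℙ {ω | l₁ ≤ W₁ ω ∧ W₁ ω ≤ u₁}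
        + (1 / 2) * ℙ {ω | l₂ ≤ W₂ ω ∧ W₂ ω ≤ u₂} := by
  have law (a b : ℝ) := HasLaw.of_map_eq (hgauss a b)
  have h₁ : HasLaw W₁ (gaussianReal 0 σ2.toNNReal) := by simpa using law 1 0
  have h₂ : HasLaw W₂ (gaussianReal 0 σ2.toNNReal) := by simpa using law 0 1
  have hD : HasLaw (fun ω => W₁ ω - W₂ ω) (gaussianReal 0 (2 * σ2 - 2 * c).toNNReal) := by
    convert law 1 (-1) using 2 <;> ring_nf
  have h2σ : (2 * σ2).toNNReal = .mk (√2 ^ 2) (sq_nonneg _) * σ2.toNNReal := by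
    rw [Real.toNNReal_mul zero_le_two]
    congr
    ext
    simp
  rw [ge_iff_le, hD.measure_eq measurableSet_Icc, h₁.measure_eq measurableSet_Icc,
    h₂.measure_eq measurableSet_Icc]
  set μ := gaussianReal 0 σ2.toNNReal
  calc 1 / 2 * μ (Icc l₁ u₁) + 1 / 2 * μ (Icc l₂ u₂)
      = 1 / 2 * (μ (Icc l₁ u₁) + μ (Icc (-u₂) (-l₂))) := by rw [gaussianReal_Icc_neg, mul_add]
    _ ≤ 1 / 2 * (2 * μ (Icc ((l₁ - u₂) / 2) ((u₁ - l₂) / 2))) := by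
      rw [sub_eq_add_neg l₁, sub_eq_add_neg u₁]
      gcongr
      exact gaussianReal_Icc_add_le_two_mul hl₁ hu₁ (neg_nonpos.2 hu₂) (neg_nonneg.2 hl₂)
    _ = μ (Icc ((l₁ - u₂) / 2) ((u₁ - l₂) / 2)) := by
      rw [← mul_assoc, one_div, ENNReal.inv_mul_cancel two_ne_zero ENNReal.ofNat_ne_top, one_mul]
    _ = gaussianReal 0 (2 * σ2).toNNReal (Icc ((l₁ - u₂) / √2) ((u₁ - l₂) / √2)) := by
      rw [h2σ, gaussianReal_sq_mul_apply_Icc (by positivity), div_div, div_div,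
        Real.mul_self_sqrt zero_le_two]
    _ ≤ _ := gaussianReal_Icc_le_of_var_le (Real.toNNReal_le_toNNReal (by linarith))
      (div_nonpos_of_nonpos_of_nonneg (by linarith) (by positivity))
      (div_nonneg (by linarith) (by positivity))

/-- Lemma A1: for a centered bivariate Gaussian vector `(W₁, W₂)` with equal variances `σ2`
and non-negative covariance `c` (joint Gaussianity encoded via all linear combinations
being Gaussian), and any `l₁, l₂ ≤ 0`, `u₁, u₂ ≥ 0`,
`P((l₁-u₂)/√2 ≤ W₁-W₂ ≤ (u₁-l₂)/√2) ≥ ½ P(l₁ ≤ W₁ ≤ u₁) + ½ P(l₂ ≤ W₂ ≤ u₂)`. -/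
theorem stmt0 {Ω : Type*} [MeasureSpace Ω] [IsProbabilityMeasure (ℙ : Measure Ω)]
    (W₁ W₂ : Ω → ℝ) (hW₁ : Measurable W₁) (hW₂ : Measurable W₂)
    (σ2 c : ℝ) (hσ2 : 0 ≤ σ2) (hc : 0 ≤ c)
    (hgauss : ∀ a b : ℝ,
      Measure.map (fun ω => a * W₁ ω + b * W₂ ω) ℙ
        = gaussianReal 0 (((a ^ 2 + b ^ 2) * σ2 + 2 * a * b * c).toNNReal))
    (l₁ l₂ u₁ u₂ : ℝ) (hl₁ : l₁ ≤ 0) (hl₂ : l₂ ≤ 0) (hu₁ : 0 ≤ u₁) (hu₂ : 0 ≤ u₂) :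
    ℙ {ω | (l₁ - u₂) / Real.sqrt 2 ≤ W₁ ω - W₂ ω ∧ W₁ ω - W₂ ω ≤ (u₁ - l₂) / Real.sqrt 2}
      ≥ (1 / 2) * ℙ {ω | l₁ ≤ W₁ ω ∧ W₁ ω ≤ u₁}
        + (1 / 2) * ℙ {ω | l₂ ≤ W₂ ω ∧ W₂ ω ≤ u₂} :=
  stmt0_general W₁ W₂ σ2 c hc hgauss l₁ l₂ u₁ u₂ hl₁ hl₂ hu₁ hu₂
end

section
/- Conformal coverage (split version): Let scores S1, ..., S_{k+1} be exchangeable real random variables (the score of the test point being S_{k+1}), and let R be the rank of S_{k+1} among them (with a data-independent tie-break). Then for α ∈ (0,1): 1 - α ≤ P(R ≤ ⌈(1-α)(k+1)⌉) ≤ 1 - α + 1/(k+1). -/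
open MeasureTheory ProbabilityTheory Finset
open scoped ENNReal

/-! By exchangeability the rank of each score has the same law, and since the scores are a.s.
distinct their ranks a.s. form a permutation of `1, …, n`, so every value `j` is taken by exactly
one index. Summing over the indices gives `P(rank of the test score = j) = 1/n` for each `j`,
hence `P(R ≤ m) = m/n`, and `m = ⌈(1-α)n⌉` lies in `[(1-α)n, (1-α)n + 1]`. -/

theorem ae_injective_of_measure_eq_zero {Ω ι : Type*} [MeasurableSpace Ω] {μ : Measure Ω}
    [Countable ι] {X : Ω → ι → ℝ} (h : ∀ i j, i ≠ j → μ {ω | X ω i = X ω j} = 0) :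
    ∀ᵐ ω ∂μ, Function.Injective (X ω) := by
  simp only [Function.Injective, ae_all_iff]
  intro i j
  by_cases hij : i = j
  · exact .of_forall fun _ _ => hij
  · exact (measure_eq_zero_iff_ae_notMem.1 (h i j hij)).mono fun _ hω heq => absurd heq hω

namespace Tuple

section Rank

variable {ι β : Type*} [Fintype ι] [LinearOrder β]

def rank (x : ι → β) (i : ι) : ℕ := #{l | x l ≤ x i}

theorem rank_comp_perm (x : ι → β) (σ : Equiv.Perm ι) (i : ι) :
    rank (x ∘ σ) i = rank x (σ i) :=
  card_bij' (fun l _ => σ l) (fun l _ => σ.symm l) (by simp) (by simp) (by simp) (by simp)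

theorem one_le_rank (x : ι → β) (i : ι) : 1 ≤ rank x i :=
  card_pos.2 ⟨i, by simp⟩

theorem rank_le_card (x : ι → β) (i : ι) : rank x i ≤ Fintype.card ι :=
  (card_filter_le _ _).trans_eq card_univ

theorem rank_lt_rank {x : ι → β} {i j : ι} (h : x i < x j) : rank x i < rank x j := by
  refine card_lt_card (Finset.ssubset_iff_subset_ne.2 ⟨fun l => ?_, fun heq => ?_⟩)
  · simpa using fun hl : x l ≤ x i => hl.trans h.le
  · have hj : j ∈ ({l | x l ≤ x j} : Finset ι) := by simp
    rw [← heq] at hj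
    exact h.not_ge (by simpa using hj)

theorem rank_injective {x : ι → β} (hx : Function.Injective x) :
    Function.Injective (rank x) := by
  intro i j hij
  rcases lt_trichotomy (x i) (x j) with h | h | h
  · exact absurd hij (rank_lt_rank h).ne
  · exact hx h
  · exact absurd hij (rank_lt_rank h).ne'

theorem image_rank {x : ι → β} (hx : Function.Injective x) :
    univ.image (rank x) = Icc 1 (Fintype.card ι) :=
  eq_of_subset_of_card_le
    (fun _ hj => by
      obtain ⟨i, -, rfl⟩ := mem_image.1 hj
      exact mem_Icc.2 ⟨one_le_rank x i, rank_le_card x i⟩)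
    (by rw [Nat.card_Icc, card_image_of_injective _ (rank_injective hx), card_univ]; omega)

end Rank

section Exchangeable

variable {Ω ι : Type*} [MeasurableSpace Ω] {μ : Measure Ω} [Fintype ι] {X : Ω → ι → ℝ}

theorem measurable_rank (i : ι) : Measurable fun x : ι → ℝ => rank x i := by
  simp only [rank, card_filter]
  exact Finset.measurable_sum _ fun l _ => Measurable.ite
    (measurableSet_le (measurable_pi_apply l) (measurable_pi_apply i)) measurable_const
    measurable_const

theorem map_rank_eq_of_exchangeable (hX : Measurable X)
    (hexch : ∀ σ : Equiv.Perm ι, μ.map (fun ω i => X ω (σ i)) = μ.map X) (i i' : ι) :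
    μ.map (fun ω => rank (X ω) i) = μ.map (fun ω => rank (X ω) i') := by
  classical
  have hσ : Measurable fun ω l => X ω (Equiv.swap i i' l) :=
    measurable_pi_lambda _ fun l => (measurable_pi_apply _).comp hX
  calc μ.map (fun ω => rank (X ω) i)
      = (μ.map fun ω l => X ω (Equiv.swap i i' l)).map (fun x => rank x i') := by
        rw [Measure.map_map (measurable_rank i') hσ]
        congr 1
        funext ω
        change rank (X ω) i = rank (X ω ∘ Equiv.swap i i') i'
        rw [rank_comp_perm, Equiv.swap_apply_right]
    _ = μ.map (fun ω => rank (X ω) i') := by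
        rw [hexch, Measure.map_map (measurable_rank i') hX]
        rfl

variable [IsProbabilityMeasure μ] (hX : Measurable X)
  (hexch : ∀ σ : Equiv.Perm ι, μ.map (fun ω i => X ω (σ i)) = μ.map X)
  (hinj : ∀ᵐ ω ∂μ, Function.Injective (X ω))
include hX hexch hinj

theorem measure_rank_eq_inv_card (i : ι) {j : ℕ} (hj : j ∈ Icc 1 (Fintype.card ι)) :
    μ {ω | rank (X ω) i = j} = (Fintype.card ι : ℝ≥0∞)⁻¹ := by
  set E : ι → Set Ω := fun l => {ω | rank (X ω) l = j}
  have hrank (l : ι) : Measurable fun ω => rank (X ω) l := (measurable_rank l).comp hX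
  have hmeas (l : ι) : MeasurableSet (E l) := hrank l (measurableSet_singleton j)
  have hE (l : ι) : μ (E l) = μ (E i) := by
    have := DFunLike.congr_fun (map_rank_eq_of_exchangeable hX hexch l i) {j}
    rwa [Measure.map_apply (hrank l) (measurableSet_singleton j),
      Measure.map_apply (hrank i) (measurableSet_singleton j)] at this
  have hdisj : Pairwise fun a b => AEDisjoint μ (E a) (E b) := fun a b hab =>
    measure_eq_zero_iff_ae_notMem.2 <| hinj.mono fun ω hω hab' =>
      hab (rank_injective hω (hab'.1.trans hab'.2.symm))
  have hcover : μ (⋃ l, E l) = 1 := by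
    refine ((ae_mem_iff_measure_eq (MeasurableSet.iUnion hmeas).nullMeasurableSet).1 ?_).trans
      measure_univ
    refine hinj.mono fun ω hω => ?_
    obtain ⟨l, -, hl⟩ := mem_image.1 ((image_rank hω).symm ▸ hj)
    exact Set.mem_iUnion.2 ⟨l, hl⟩
  rw [measure_iUnion₀ hdisj fun l => (hmeas l).nullMeasurableSet, tsum_fintype,
    sum_congr rfl fun l _ => hE l, sum_const, card_univ, nsmul_eq_mul, mul_comm] at hcover
  exact ENNReal.eq_inv_of_mul_eq_one_left hcover

theorem measure_rank_le (i : ι) {m : ℕ} (hm : m ≤ Fintype.card ι) :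
    μ {ω | rank (X ω) i ≤ m} = m / Fintype.card ι := by
  have hunion : {ω | rank (X ω) i ≤ m} = ⋃ j ∈ Icc 1 m, {ω | rank (X ω) i = j} := by
    ext ω
    simp [one_le_rank]
  have hdisj : (Icc 1 m : Set ℕ).PairwiseDisjoint fun j => {ω | rank (X ω) i = j} :=
    fun _ _ _ _ hab => Set.disjoint_left.2 fun _ ha hb => hab (ha.symm.trans hb)
  rw [hunion, measure_biUnion_finset hdisj
      fun j _ => (measurable_rank i).comp hX (measurableSet_singleton j),
    sum_congr rfl fun j hj =>
      measure_rank_eq_inv_card hX hexch hinj i (Icc_subset_Icc_right hm hj),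
    sum_const, Nat.card_Icc, nsmul_eq_mul, Nat.add_sub_cancel, div_eq_mul_inv]

end Exchangeable

end Tuple

theorem ceil_mul_div_mem_Icc (q : ℝ) {n : ℝ} (hn : 0 < n) :
    (⌈q * n⌉ : ℝ) / n ∈ Set.Icc q (q + 1 / n) := by
  constructor
  · rw [le_div_iff₀ hn]
    exact Int.le_ceil _
  · rw [div_le_iff₀ hn, add_mul, one_div_mul_cancel hn.ne']
    exact (Int.ceil_lt_add_one _).le

/-- Split-conformal coverage: if the scores `S 0, …, S k` (the last being the score of the
test point) are exchangeable with a.s. no ties, and `R` is the rank of the last score among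
them (data-independent index tie-break), then for `α ∈ (0,1)`,
`1-α ≤ P(R ≤ ⌈(1-α)(k+1)⌉) ≤ 1-α + 1/(k+1)`. -/
theorem stmt11 {Ω : Type*} [MeasureSpace Ω] [IsProbabilityMeasure (ℙ : Measure Ω)]
    (k : ℕ) (S : Fin (k + 1) → Ω → ℝ) (hS : ∀ i, Measurable (S i))
    (hexch : ∀ σ : Equiv.Perm (Fin (k + 1)),
      Measure.map (fun ω i => S (σ i) ω) ℙ = Measure.map (fun ω i => S i ω) ℙ)
    (hties : ∀ i j : Fin (k + 1), i ≠ j → ℙ {ω | S i ω = S j ω} = 0)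
    (R : Ω → ℕ)
    (hR : ∀ ω, R ω =
      Set.ncard {i : Fin (k + 1) |
        S i ω < S (Fin.last k) ω ∨ (S i ω = S (Fin.last k) ω ∧ i ≤ Fin.last k)})
    (α : ℝ) (hα : α ∈ Set.Ioo (0 : ℝ) 1) :
    1 - α ≤ (ℙ {ω | (R ω : ℤ) ≤ ⌈(1 - α) * (k + 1 : ℝ)⌉}).toReal
      ∧ (ℙ {ω | (R ω : ℤ) ≤ ⌈(1 - α) * (k + 1 : ℝ)⌉}).toReal ≤ 1 - α + 1 / (k + 1 : ℝ) := by
  obtain ⟨hα0, hα1⟩ := hα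
  set X : Ω → Fin (k + 1) → ℝ := fun ω i => S i ω
  have hR_rank (ω : Ω) : R ω = Tuple.rank (X ω) (Fin.last k) := by
    rw [hR, Tuple.rank, ← Set.ncard_coe_finset, coe_filter]
    congr 1
    ext i
    simp [X, Fin.le_last, ← le_iff_lt_or_eq]
  obtain ⟨m, hm⟩ : ∃ m : ℕ, (m : ℤ) = ⌈(1 - α) * (k + 1 : ℝ)⌉ :=
    Int.eq_ofNat_of_zero_le (Int.ceil_nonneg (by nlinarith)) |>.imp fun _ => Eq.symm
  have hm_le : m ≤ Fintype.card (Fin (k + 1)) := by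
    have : (m : ℤ) ≤ k + 1 := hm ▸ Int.ceil_le.2 (by push_cast; nlinarith)
    rw [Fintype.card_fin]
    omega
  have hprob : (ℙ {ω | (R ω : ℤ) ≤ m}).toReal = m / (k + 1 : ℝ) := by
    simp only [hR_rank, Nat.cast_le]
    rw [Tuple.measure_rank_le (measurable_pi_lambda _ hS) hexch
      (ae_injective_of_measure_eq_zero hties) _ hm_le, ENNReal.toReal_div,
      ENNReal.toReal_natCast, ENNReal.toReal_natCast, Fintype.card_fin]
    push_cast
    rfl
  rw [← hm, hprob]
  have hbounds := ceil_mul_div_mem_Icc (1 - α) (n := k + 1) (by positivity)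
  rw [← hm, Int.cast_natCast] at hbounds
  exact hbounds
end

section
/- Suppose (e1, e2) is, conditional on X, a centered bivariate Gaussian with equal variances and non-negative covariance, and [l(t), u(t)] are intervals containing f(t) for t ∈ {-1,1}. If P(l(1) ≤ f(1) + e1 ≤ u(1)) ≥ 1-α and P(l(-1) ≤ f(-1) + e2 ≤ u(-1)) ≥ 1-α, then P( (l(1)-f(1))/√2 - (u(-1)-f(-1))/√2 ≤ e1 - e2 ≤ (u(1)-f(1))/√2 - (l(-1)-f(-1))/√2 ) ≥ 1-α, where all quantities l, u, f are deterministic (conditional on X). -/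
/-!
The density of a centred Gaussian law `ν` is even and decreasing on `[0, ∞)`, so `t ↦ ν [0, t]` is
concave there; hence `ν [a₁, b₁] + ν [a₂, b₂] ≤ 2 ν [(a₁ + a₂) / 2, (b₁ + b₂) / 2]` whenever
`aᵢ ≤ 0 ≤ bᵢ`. Applied to `e₁` and `-e₂`, which both have law `N(0, σ²)`, this gives mass at least
`1 - α` to the averaged interval under `N(0, σ²)`, i.e. to its `√2`-dilate under `N(0, 2σ²)`.
Finally `e₁ - e₂` has law `N(0, 2σ² - 2c)` with `c ≥ 0`, and lowering the variance of a centred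
Gaussian can only increase the mass of a set that is star-shaped about `0`.
-/

open MeasureTheory ProbabilityTheory Set intervalIntegral
open scoped NNReal

section MidpointConcavity

variable {f : ℝ → ℝ}

theorem AntitoneOn.integral_add_integral_le_two_mul_integral_midpoint
    (hanti : AntitoneOn f (Ici 0)) (hf : ∀ a b, IntervalIntegrable f volume a b)
    {s t : ℝ} (hs : 0 ≤ s) (ht : 0 ≤ t) :
    (∫ x in 0..s, f x) + ∫ x in 0..t, f x ≤ 2 * ∫ x in 0..(s + t) / 2, f x := by
  wlog hst : s ≤ t generalizing s t
  · simpa only [add_comm] using this ht hs (le_of_not_ge hst)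
  set m := (s + t) / 2 with hm
  have hsm : s ≤ m := by linarith
  have hmt : m ≤ t := by linarith
  -- both halves of `[s, t]` have length `m - s`; `f ≥ f m` on the left one, `f ≤ f m` on the right
  have right_le_left : ∫ x in m..t, f x ≤ ∫ x in s..m, f x := calc
    ∫ x in m..t, f x ≤ ∫ _ in m..t, f m :=
      integral_mono_on hmt (hf m t) intervalIntegrable_const fun x hx =>
        hanti (mem_Ici.2 (by linarith)) (mem_Ici.2 (by linarith [hx.1])) hx.1
    _ = ∫ _ in s..m, f m := by
      simp only [intervalIntegral.integral_const, smul_eq_mul]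
      congr 1
      linarith
    _ ≤ ∫ x in s..m, f x :=
      integral_mono_on hsm intervalIntegrable_const (hf s m) fun x hx =>
        hanti (mem_Ici.2 (by linarith [hx.1])) (mem_Ici.2 (by linarith)) hx.2
  linarith [integral_add_adjacent_intervals (hf 0 s) (hf s m),
    integral_add_adjacent_intervals (hf 0 m) (hf m t)]

theorem Function.Even.intervalIntegral_eq_integral_neg_add (heven : f.Even)
    (hf : ∀ a b, IntervalIntegrable f volume a b) (a b : ℝ) :
    ∫ x in a..b, f x = (∫ x in 0..-a, f x) + ∫ x in 0..b, f x := by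
  rw [← integral_add_adjacent_intervals (hf a 0) (hf 0 b)]
  congr 1
  calc ∫ x in a..0, f x = ∫ x in 0..-a, f (-x) := by rw [integral_comp_neg, neg_neg, neg_zero]
    _ = ∫ x in 0..-a, f x := integral_congr fun x _ => heven x

theorem Function.Even.integral_add_integral_le_two_mul_integral_midpoint (heven : f.Even)
    (hanti : AntitoneOn f (Ici 0)) (hf : ∀ a b, IntervalIntegrable f volume a b)
    {a₁ b₁ a₂ b₂ : ℝ} (ha₁ : a₁ ≤ 0) (hb₁ : 0 ≤ b₁) (ha₂ : a₂ ≤ 0) (hb₂ : 0 ≤ b₂) :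
    (∫ x in a₁..b₁, f x) + ∫ x in a₂..b₂, f x
      ≤ 2 * ∫ x in (a₁ + a₂) / 2..(b₁ + b₂) / 2, f x := by
  rw [heven.intervalIntegral_eq_integral_neg_add hf a₁,
    heven.intervalIntegral_eq_integral_neg_add hf a₂,
    heven.intervalIntegral_eq_integral_neg_add hf ((a₁ + a₂) / 2), show -((a₁ + a₂) / 2) = (-a₁ + -a₂) / 2 by ring]
  linarith [hanti.integral_add_integral_le_two_mul_integral_midpoint hf
      (neg_nonneg.2 ha₁) (neg_nonneg.2 ha₂),
    hanti.integral_add_integral_le_two_mul_integral_midpoint hf hb₁ hb₂]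

end MidpointConcavity

lemma measure_preimage_eq_of_map_eq {Ω α : Type*} [MeasurableSpace Ω] [MeasurableSpace α]
    {μ : Measure Ω} {ν : Measure α} [NeZero ν] {X : Ω → α} (h : μ.map X = ν)
    {s : Set α} (hs : MeasurableSet s) : μ (X ⁻¹' s) = ν s := by
  subst h
  exact (Measure.map_apply_of_aemeasurable (.of_map_ne_zero (NeZero.ne (μ.map X))) hs).symm

lemma measure_add_mem_Icc_eq_of_map_eq {Ω : Type*} [MeasurableSpace Ω] {μ : Measure Ω}
    {ν : Measure ℝ} [NeZero ν] {X : Ω → ℝ} (h : μ.map X = ν) (l f u : ℝ) :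
    μ {ω | l ≤ f + X ω ∧ f + X ω ≤ u} = ν (Icc (l - f) (u - f)) := by
  rw [← measure_preimage_eq_of_map_eq h measurableSet_Icc]
  simp only [preimage, mem_Icc, sub_le_iff_le_add', le_sub_iff_add_le']

lemma even_gaussianPDFReal_zero (v : ℝ≥0) : (gaussianPDFReal 0 v).Even := fun x => by
  rw [gaussianPDFReal, gaussianPDFReal, sub_zero, sub_zero, neg_sq]

lemma antitoneOn_gaussianPDFReal_zero (v : ℝ≥0) : AntitoneOn (gaussianPDFReal 0 v) (Ici 0) := by
  intro x hx y hy hxy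
  simp only [gaussianPDFReal, sub_zero]
  gcongr

lemma gaussianReal_Icc_toReal_eq_integral {v : ℝ≥0} (hv : v ≠ 0) {a b : ℝ} (hab : a ≤ b) :
    (gaussianReal 0 v (Icc a b)).toReal = ∫ x in a..b, gaussianPDFReal 0 v x := by
  rw [gaussianReal_apply_eq_integral 0 hv, ENNReal.toReal_ofReal
      (setIntegral_nonneg measurableSet_Icc fun x _ => gaussianPDFReal_nonneg _ _ _),
    integral_Icc_eq_integral_Ioc, integral_of_le hab]

theorem gaussianReal_Icc_add_le_two_mul_midpoint (v : ℝ≥0) {a₁ b₁ a₂ b₂ : ℝ}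
    (ha₁ : a₁ ≤ 0) (hb₁ : 0 ≤ b₁) (ha₂ : a₂ ≤ 0) (hb₂ : 0 ≤ b₂) :
    (gaussianReal 0 v (Icc a₁ b₁)).toReal + (gaussianReal 0 v (Icc a₂ b₂)).toReal
      ≤ 2 * (gaussianReal 0 v (Icc ((a₁ + a₂) / 2) ((b₁ + b₂) / 2))).toReal := by
  rcases eq_or_ne v 0 with rfl | hv
  · have hmem : ∀ {a b : ℝ}, a ≤ 0 → 0 ≤ b → (0 : ℝ) ∈ Icc a b := fun ha hb => ⟨ha, hb⟩
    simp only [gaussianReal_zero_var, Measure.dirac_apply_of_mem (hmem ha₁ hb₁),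
      Measure.dirac_apply_of_mem (hmem ha₂ hb₂),
      Measure.dirac_apply_of_mem
        (hmem (a := (a₁ + a₂) / 2) (b := (b₁ + b₂) / 2) (by linarith) (by linarith))]
    norm_num
  · rw [gaussianReal_Icc_toReal_eq_integral hv (ha₁.trans hb₁),
      gaussianReal_Icc_toReal_eq_integral hv (ha₂.trans hb₂),
      gaussianReal_Icc_toReal_eq_integral hv (by linarith)]
    exact (even_gaussianPDFReal_zero v).integral_add_integral_le_two_mul_integral_midpoint
      (antitoneOn_gaussianPDFReal_zero v)
      (fun _ _ => (integrable_gaussianPDFReal 0 v).intervalIntegrable) ha₁ hb₁ ha₂ hb₂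

theorem StarConvex.gaussianReal_apply_le_of_variance_le {s : Set ℝ} (hs : StarConvex ℝ 0 s)
    {v w : ℝ≥0} (hvw : v ≤ w) : gaussianReal 0 w s ≤ gaussianReal 0 v s := by
  rcases eq_or_ne w 0 with rfl | hw
  · rw [nonpos_iff_eq_zero.1 hvw]
  set t := √(v / w : ℝ)
  have hmap : (gaussianReal 0 w).map (t * ·) = gaussianReal 0 v := by
    rw [gaussianReal_map_const_mul, mul_zero]
    congr 1
    ext
    change t ^ 2 * w = v
    rw [Real.sq_sqrt (by positivity), div_mul_cancel₀ _ (NNReal.coe_ne_zero.2 hw)]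
  have ht : t ≤ 1 := Real.sqrt_le_one.2 (div_le_one_of_le₀ hvw w.coe_nonneg)
  calc gaussianReal 0 w s ≤ gaussianReal 0 w ((t * ·) ⁻¹' s) :=
        measure_mono fun x hx => hs.smul_mem hx (Real.sqrt_nonneg _) ht
    _ ≤ gaussianReal 0 v s := hmap ▸ Measure.le_map_apply (measurable_const_mul _).aemeasurable s

lemma gaussianReal_two_mul_apply_Icc (v : ℝ≥0) (a b : ℝ) :
    gaussianReal 0 (2 * v) (Icc a b) = gaussianReal 0 v (Icc (a / √2) (b / √2)) := by
  have hmap : (gaussianReal 0 v).map (√2 * ·) = gaussianReal 0 (2 * v) := by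
    rw [gaussianReal_map_const_mul, mul_zero]
    congr 1
    ext
    simp
  rw [← hmap, Measure.map_apply (measurable_const_mul _) measurableSet_Icc,
    preimage_const_mul_Icc₀ _ _ (by positivity)]

lemma gaussianReal_zero_apply_Icc_neg (v : ℝ≥0) (a b : ℝ) :
    gaussianReal 0 v (Icc (-b) (-a)) = gaussianReal 0 v (Icc a b) := by
  conv_lhs => rw [← neg_zero, ← gaussianReal_map_neg]
  rw [Measure.map_apply measurable_neg measurableSet_Icc]
  rw [neg_preimage, neg_Icc, neg_neg, neg_neg]

theorem gaussianReal_Icc_add_le_two_mul_Icc_sub_div_sqrt_two {v w : ℝ≥0} (hw : w ≤ 2 * v)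
    {a₁ b₁ a₂ b₂ : ℝ} (ha₁ : a₁ ≤ 0) (hb₁ : 0 ≤ b₁) (ha₂ : a₂ ≤ 0) (hb₂ : 0 ≤ b₂) :
    (gaussianReal 0 v (Icc a₁ b₁)).toReal + (gaussianReal 0 v (Icc a₂ b₂)).toReal
      ≤ 2 * (gaussianReal 0 w (Icc (a₁ / √2 - b₂ / √2) (b₁ / √2 - a₂ / √2))).toReal := by
  have hdiv (x y : ℝ) : (x / √2 - y / √2) / √2 = (x + -y) / 2 := by
    rw [← sub_div, div_div, Real.mul_self_sqrt zero_le_two, sub_eq_add_neg]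
  have hzero : (0 : ℝ) ∈ Icc (a₁ / √2 - b₂ / √2) (b₁ / √2 - a₂ / √2) :=
    ⟨sub_nonpos.2 (by gcongr; linarith), sub_nonneg.2 (by gcongr; linarith)⟩
  rw [← gaussianReal_zero_apply_Icc_neg v a₂]
  calc _ ≤ 2 * (gaussianReal 0 v (Icc ((a₁ + -b₂) / 2) ((b₁ + -a₂) / 2))).toReal :=
        gaussianReal_Icc_add_le_two_mul_midpoint v ha₁ hb₁ (by linarith) (by linarith)
    _ = 2 * (gaussianReal 0 (2 * v) (Icc (a₁ / √2 - b₂ / √2) (b₁ / √2 - a₂ / √2))).toReal := by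
        rw [gaussianReal_two_mul_apply_Icc, hdiv, hdiv]
    _ ≤ _ := by
        gcongr 2 * ?_
        exact ENNReal.toReal_mono (measure_ne_top _ _)
          (((convex_Icc _ _).starConvex hzero).gaussianReal_apply_le_of_variance_le hw)

theorem stmt12_general {Ω : Type*} [MeasureSpace Ω] [IsProbabilityMeasure (ℙ : Measure Ω)]
    (e₁ e₂ : Ω → ℝ)
    (σ2 c : ℝ) (hc : 0 ≤ c)
    (hgauss : ∀ a b : ℝ,
      Measure.map (fun ω => a * e₁ ω + b * e₂ ω) ℙ
        = gaussianReal 0 (((a ^ 2 + b ^ 2) * σ2 + 2 * a * b * c).toNNReal))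
    (l₁ u₁ f₁ l₂ u₂ f₂ : ℝ)
    (h₁ : l₁ ≤ f₁ ∧ f₁ ≤ u₁) (h₂ : l₂ ≤ f₂ ∧ f₂ ≤ u₂)
    (α : ℝ)
    (hcov₁ : (ℙ {ω | l₁ ≤ f₁ + e₁ ω ∧ f₁ + e₁ ω ≤ u₁}).toReal ≥ 1 - α)
    (hcov₂ : (ℙ {ω | l₂ ≤ f₂ + e₂ ω ∧ f₂ + e₂ ω ≤ u₂}).toReal ≥ 1 - α) :
    (ℙ {ω | (l₁ - f₁) / Real.sqrt 2 - (u₂ - f₂) / Real.sqrt 2 ≤ e₁ ω - e₂ ω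
        ∧ e₁ ω - e₂ ω ≤ (u₁ - f₁) / Real.sqrt 2 - (l₂ - f₂) / Real.sqrt 2}).toReal
      ≥ 1 - α := by
  obtain ⟨hl₁, hu₁⟩ := h₁
  obtain ⟨hl₂, hu₂⟩ := h₂
  have law₁ : Measure.map e₁ ℙ = gaussianReal 0 σ2.toNNReal := by simpa using hgauss 1 0
  have law₂ : Measure.map e₂ ℙ = gaussianReal 0 σ2.toNNReal := by simpa using hgauss 0 1
  have law_sub : Measure.map (fun ω => e₁ ω - e₂ ω) ℙ
      = gaussianReal 0 (2 * σ2 - 2 * c).toNNReal := by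
    convert hgauss 1 (-1) using 2
    · ext ω; ring
    · congr 1; ring
  have hvar : (2 * σ2 - 2 * c).toNNReal ≤ 2 * σ2.toNNReal := by
    rw [← Real.toNNReal_ofNat, ← Real.toNNReal_mul zero_le_two]
    exact Real.toNNReal_le_toNNReal (by linarith)
  have key := gaussianReal_Icc_add_le_two_mul_Icc_sub_div_sqrt_two hvar
    (sub_nonpos.2 hl₁) (sub_nonneg.2 hu₁) (sub_nonpos.2 hl₂) (sub_nonneg.2 hu₂)
  rw [← measure_add_mem_Icc_eq_of_map_eq law₁, ← measure_add_mem_Icc_eq_of_map_eq law₂,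
    ← measure_preimage_eq_of_map_eq law_sub measurableSet_Icc] at key
  show (ℙ ((fun ω => e₁ ω - e₂ ω) ⁻¹' Icc _ _)).toReal ≥ 1 - α
  linarith

/-- If `(e₁, e₂)` is centered bivariate Gaussian with equal variances and non-negative
covariance, the deterministic intervals `[l₁,u₁]`, `[l₂,u₂]` contain `f₁`, `f₂` and cover
`f₁ + e₁`, `f₂ + e₂` with probability at least `1-α` each, then the `√2`-shrunk interval
covers `e₁ - e₂` with probability at least `1-α`. -/
theorem stmt12 {Ω : Type*} [MeasureSpace Ω] [IsProbabilityMeasure (ℙ : Measure Ω)]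
    (e₁ e₂ : Ω → ℝ) (he₁ : Measurable e₁) (he₂ : Measurable e₂)
    (σ2 c : ℝ) (hσ2 : 0 ≤ σ2) (hc : 0 ≤ c)
    (hgauss : ∀ a b : ℝ,
      Measure.map (fun ω => a * e₁ ω + b * e₂ ω) ℙ
        = gaussianReal 0 (((a ^ 2 + b ^ 2) * σ2 + 2 * a * b * c).toNNReal))
    (l₁ u₁ f₁ l₂ u₂ f₂ : ℝ)
    (h₁ : l₁ ≤ f₁ ∧ f₁ ≤ u₁) (h₂ : l₂ ≤ f₂ ∧ f₂ ≤ u₂)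
    (α : ℝ) (hα : α ∈ Set.Ioo (0 : ℝ) 1)
    (hcov₁ : (ℙ {ω | l₁ ≤ f₁ + e₁ ω ∧ f₁ + e₁ ω ≤ u₁}).toReal ≥ 1 - α)
    (hcov₂ : (ℙ {ω | l₂ ≤ f₂ + e₂ ω ∧ f₂ + e₂ ω ≤ u₂}).toReal ≥ 1 - α) :
    (ℙ {ω | (l₁ - f₁) / Real.sqrt 2 - (u₂ - f₂) / Real.sqrt 2 ≤ e₁ ω - e₂ ω
        ∧ e₁ ω - e₂ ω ≤ (u₁ - f₁) / Real.sqrt 2 - (l₂ - f₂) / Real.sqrt 2}).toReal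
      ≥ 1 - α :=
  stmt12_general e₁ e₂ σ2 c hc hgauss l₁ u₁ f₁ l₂ u₂ f₂ h₁ h₂ α hcov₁ hcov₂
end
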